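/- arXiv:2509.06075 — 4 statements merged into one kernel-verified Lean document; each statement's English description precedes it below -/
import Mathlib

section
/- Let X_n(x) denote the maximum dater recursion started at x ≥ 0 with random positive inputs (s_j, t_j). Then for every measurable set A and every n, |P(X_n(x) ∈ A) - P(X_n(0) ∈ A)| ≤ P(T_n ≤ x), where T_n = t_1 + ... + t_n. In particular the total variation distance between the laws of X_n(x) and X_n(0) is at most P(T_n ≤ x). -/
open MeasureTheory

/-!
Unrolling the recursion gives `X_n(x) = max (x - T_n, X_n(0))`, and `X_n(0) ≥ s_n > 0` once
`n ≥ 1`. Hence on the event `T_n > x` the two chains coincide, and the bound is the usual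
coupling inequality.
-/

theorem abs_measureReal_preimage_sub_le {Ω α : Type*} [MeasurableSpace Ω] (μ : Measure Ω)
    [IsFiniteMeasure μ] {f g : Ω → α} {E : Set Ω} (hfg : ∀ ω ∉ E, f ω = g ω) (A : Set α) :
    |μ.real (f ⁻¹' A) - μ.real (g ⁻¹' A)| ≤ μ.real E := by
  have subset_union {f g : Ω → α} (hfg : ∀ ω ∉ E, f ω = g ω) : f ⁻¹' A ⊆ g ⁻¹' A ∪ E := by
    intro ω hω
    by_cases hE : ω ∈ E
    · exact Or.inr hE
    · exact Or.inl (by simpa [hfg ω hE] using hω)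
  have hf := (measureReal_mono (subset_union hfg)).trans (measureReal_union_le (μ := μ) _ E)
  have hg := (measureReal_mono (subset_union fun ω hω => (hfg ω hω).symm)).trans
    (measureReal_union_le (μ := μ) _ E)
  rw [abs_sub_le_iff]
  constructor <;> linarith

section MaxDater

variable {s t : ℕ → ℝ} {X : ℝ → ℕ → ℝ}

theorem maxDater_eq_max_sub_sum (hX0 : ∀ x, X x 0 = x)
    (hXrec : ∀ x n, X x (n + 1) = max (X x n - t (n + 1)) (s (n + 1)))
    {x : ℝ} (hx : 0 ≤ x) (n : ℕ) :
    X x n = max (x - ∑ i ∈ Finset.Icc 1 n, t i) (X 0 n) := by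
  induction n with
  | zero => simp [hX0, hx]
  | succ m ih =>
    rw [hXrec, hXrec, ih, Finset.sum_Icc_succ_top (Nat.le_add_left 1 m), ← max_sub_sub_right,
      max_assoc, ← sub_sub]

theorem maxDater_eq_of_lt_sum (hs : ∀ j, 1 ≤ j → 0 < s j) (hX0 : ∀ x, X x 0 = x)
    (hXrec : ∀ x n, X x (n + 1) = max (X x n - t (n + 1)) (s (n + 1)))
    {x : ℝ} (hx : 0 ≤ x) {n : ℕ} (hxT : x < ∑ i ∈ Finset.Icc 1 n, t i) :
    X x n = X 0 n := by
  obtain _ | m := n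
  · simp at hxT
    linarith
  have hpos : 0 < X 0 (m + 1) := by
    rw [hXrec]
    exact (hs (m + 1) (Nat.le_add_left 1 m)).trans_le (le_max_right _ _)
  rw [maxDater_eq_max_sub_sum hX0 hXrec hx]
  exact max_eq_right (by linarith)

end MaxDater

theorem stmt2_general {Ω : Type*} [MeasurableSpace Ω] (ℙ : Measure Ω) [IsProbabilityMeasure ℙ]
    (s t : ℕ → Ω → ℝ) (hs : ∀ j ω, 1 ≤ j → 0 < s j ω)
    (X : ℝ → ℕ → Ω → ℝ) (hX0 : ∀ x ω, X x 0 ω = x)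
    (hXrec : ∀ x n ω, X x (n + 1) ω = max (X x n ω - t (n + 1) ω) (s (n + 1) ω))
    (T : ℕ → Ω → ℝ) (hT : ∀ n ω, T n ω = ∑ i ∈ Finset.Icc 1 n, t i ω)
    (x : ℝ) (hx : 0 ≤ x) (n : ℕ) (A : Set ℝ) :
    |(ℙ {ω | X x n ω ∈ A}).toReal - (ℙ {ω | X 0 n ω ∈ A}).toReal|
      ≤ (ℙ {ω | T n ω ≤ x}).toReal := by
  refine abs_measureReal_preimage_sub_le ℙ (fun ω hω => ?_) A
  have hxT : x < ∑ i ∈ Finset.Icc 1 n, t i ω := by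
    simpa [hT] using hω
  exact maxDater_eq_of_lt_sum (X := fun y k => X y k ω) (fun j => hs j ω) (fun y => hX0 y ω)
    (fun y k => hXrec y k ω) hx hxT

/-- For the maximum dater recursion with random positive inputs,
`|P(X_n(x) ∈ A) - P(X_n(0) ∈ A)| ≤ P(T_n ≤ x)` for every measurable `A`. -/
theorem stmt2 {Ω : Type*} [MeasurableSpace Ω] (ℙ : Measure Ω) [IsProbabilityMeasure ℙ]
    (s t : ℕ → Ω → ℝ) (hs : ∀ j ω, 1 ≤ j → 0 < s j ω) (ht : ∀ j ω, 1 ≤ j → 0 < t j ω)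
    (hmeas_s : ∀ j, Measurable (s j)) (hmeas_t : ∀ j, Measurable (t j))
    (X : ℝ → ℕ → Ω → ℝ) (hX0 : ∀ x ω, X x 0 ω = x)
    (hXrec : ∀ x n ω, X x (n + 1) ω = max (X x n ω - t (n + 1) ω) (s (n + 1) ω))
    (T : ℕ → Ω → ℝ) (hT : ∀ n ω, T n ω = ∑ i ∈ Finset.Icc 1 n, t i ω)
    (x : ℝ) (hx : 0 ≤ x) (n : ℕ) (A : Set ℝ) (hA : MeasurableSet A) :
    |(ℙ {ω | X x n ω ∈ A}).toReal - (ℙ {ω | X 0 n ω ∈ A}).toReal|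
      ≤ (ℙ {ω | T n ω ≤ x}).toReal :=
  stmt2_general ℙ s t hs X hX0 hXrec T hT x hx n A
end

section
/- Let (s_j)_{j∈ℤ}, (t_j)_{j∈ℤ} be two-sided sequences of positive reals and suppose (X_j')_{j∈ℤ} is a real-valued solution of the recursion X_{j+1}' = max(X_j' - t_{j+1}, s_{j+1}) for all j ∈ ℤ. Then for every n ≥ 1, X_0' ≥ max_{-n ≤ j ≤ 0} [ s_j - ∑_{ℓ=j+1}^{0} t_ℓ ]; consequently X_0' ≥ X_0* := sup_{k ≥ 0} [ s_{-k} - ∑_{ℓ=-k+1}^{0} t_ℓ ]. -/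
lemma stmt5_aux (s t : ℤ → ℝ) (X' : ℤ → ℝ)
    (hX' : ∀ j : ℤ, X' (j + 1) = max (X' j - t (j + 1)) (s (j + 1))) :
    ∀ n : ℕ, X' 0 ≥ X' (-(n : ℤ)) - ∑ ℓ ∈ Finset.Icc (-(n : ℤ) + 1) 0, t ℓ := by
  intro n
  induction n with
  | zero => simp
  | succ n ih =>
    have hstep : X' (-(n : ℤ)) ≥ X' (-((n : ℕ) + 1 : ℤ)) - t (-(n : ℤ)) := by
      have := hX' (-((n : ℕ) + 1 : ℤ))
      have h1 : (-((n : ℕ) + 1 : ℤ)) + 1 = -(n : ℤ) := by ring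
      rw [h1] at this
      rw [this]
      exact le_max_left _ _
    have hsum : ∑ ℓ ∈ Finset.Icc (-((n : ℕ) + 1 : ℤ) + 1) 0, t ℓ
        = t (-(n : ℤ)) + ∑ ℓ ∈ Finset.Icc (-(n : ℤ) + 1) 0, t ℓ := by
      have h1 : (-((n : ℕ) + 1 : ℤ)) + 1 = -(n : ℤ) := by ring
      rw [h1]
      have : Finset.Icc (-(n : ℤ)) 0 = insert (-(n : ℤ)) (Finset.Icc (-(n : ℤ) + 1) 0) := by
        ext x
        simp only [Finset.mem_Icc, Finset.mem_insert]
        constructor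
        · rintro ⟨h1, h2⟩
          rcases eq_or_lt_of_le h1 with h | h
          · exact Or.inl h.symm
          · exact Or.inr ⟨h, h2⟩
        · rintro (h | ⟨h1, h2⟩)
          · exact ⟨le_of_eq h.symm, by omega⟩
          · exact ⟨by omega, h2⟩
      rw [this, Finset.sum_insert (by simp)]
    have hcast : (-((n + 1 : ℕ) : ℤ)) = -((n : ℕ) + 1 : ℤ) := by push_cast; ring
    rw [hcast, hsum]
    have := sub_le_sub_right hstep.le 0
    linarith
/-- Any bi-infinite solution `X'` of the maximum dater recursion
satisfies `X' 0 ≥ max_{-n ≤ j ≤ 0} (s j - ∑_{ℓ=j+1}^{0} t ℓ)` for all `n ≥ 1`,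
and hence `X' 0 ≥ X* 0 = sup_{k ≥ 0} (s (-k) - ∑_{ℓ=-k+1}^{0} t ℓ)`. -/
theorem stmt5 (s t : ℤ → ℝ) (hs : ∀ j, 0 < s j) (ht : ∀ j, 0 < t j)
    (X' : ℤ → ℝ) (hX' : ∀ j : ℤ, X' (j + 1) = max (X' j - t (j + 1)) (s (j + 1))) :
    (∀ n : ℕ, 1 ≤ n →
      X' 0 ≥ (Finset.Icc (-(n : ℤ)) 0).sup'
        (Finset.nonempty_Icc.mpr (by exact_mod_cast neg_nonpos.mpr (Nat.cast_nonneg n)))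
        (fun j => s j - ∑ ℓ ∈ Finset.Icc (j + 1) 0, t ℓ)) ∧
    X' 0 ≥ ⨆ k : ℕ, (s (-(k : ℤ)) - ∑ ℓ ∈ Finset.Icc (-(k : ℤ) + 1) 0, t ℓ) := by
  have hXs : ∀ j : ℤ, X' j ≥ s j := by
    intro j
    have := hX' (j - 1)
    simp only [sub_add_cancel] at this
    rw [this]
    exact le_max_right _ _
  have key : ∀ j : ℤ, j ≤ 0 → X' 0 ≥ s j - ∑ ℓ ∈ Finset.Icc (j + 1) 0, t ℓ := by
    intro j hj
    have hjn : j = -((-j).toNat : ℤ) := by omega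
    have h1 := stmt5_aux s t X' hX' (-j).toNat
    rw [← hjn] at h1
    have h2 := hXs j
    linarith
  constructor
  · intro n hn
    apply le_of_eq_of_le rfl
    apply Finset.sup'_le
    intro j hj
    exact key j (Finset.mem_Icc.mp hj).2
  · exact ciSup_le fun k => key (-(k : ℤ)) (by omega)
end

section
/- Let (s_j)_{j∈ℤ}, (t_j)_{j∈ℤ} be two-sided sequences of positive reals, (X_j') a bi-infinite solution of X_{j+1}' = max(X_j' - t_{j+1}, s_{j+1}), and suppose that for some n ≥ 1 the sum ∑_{ℓ=-n+1}^{0} t_ℓ > X_{-n}'. Then X_0' = max_{-n < j ≤ 0} [ s_j - ∑_{ℓ=j+1}^{0} t_ℓ ], and in particular X_0' ≤ X_0* = sup_{k ≥ 0} [ s_{-k} - ∑_{ℓ=-k+1}^{0} t_ℓ ]. -/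
/-!
Unrolling the recursion from time `-n` to time `0` writes `X' 0` as the maximum of the drained
initial value `X' (-n) - ∑_{ℓ=-n+1}^{0} t ℓ` and of the terms `s j - ∑_{ℓ=j+1}^{0} t ℓ`,
`-n < j ≤ 0`. The drain hypothesis makes the first candidate negative, whereas the term `j = 0`
is `s 0 > 0`; hence the maximum is attained among the latter.
-/

open Finset

lemma sum_Icc_add_one_right {M : Type*} [AddCommMonoid M] (f : ℤ → M) {a b : ℤ}
    (h : a ≤ b + 1) :
    ∑ ℓ ∈ Icc a (b + 1), f ℓ = ∑ ℓ ∈ Icc a b, f ℓ + f (b + 1) := by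
  rw [← insert_Icc_right_eq_Icc_add_one h, sum_insert (by simp), add_comm]

lemma sup'_Icc_add_one_right {α : Type*} [LinearOrder α] (f : ℤ → α) {a b : ℤ}
    (h : a ≤ b) :
    (Icc a (b + 1)).sup' (nonempty_Icc.mpr (by omega)) f
      = max ((Icc a b).sup' (nonempty_Icc.mpr h) f) (f (b + 1)) := by
  rw [sup'_congr _ (insert_Icc_right_eq_Icc_add_one (by omega)).symm fun _ _ => rfl,
    sup'_insert, sup_comm]

theorem eq_max_sub_sum_sup'_of_lt {G : Type*} [AddCommGroup G] [LinearOrder G]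
    [IsOrderedAddMonoid G] {s t X' : ℤ → G}
    (hX' : ∀ j : ℤ, X' (j + 1) = max (X' j - t (j + 1)) (s (j + 1))) {a b : ℤ} (hab : a < b) :
    X' b = max (X' a - ∑ ℓ ∈ Icc (a + 1) b, t ℓ)
      ((Icc (a + 1) b).sup' (nonempty_Icc.mpr hab)
        fun j => s j - ∑ ℓ ∈ Icc (j + 1) b, t ℓ) := by
  induction b, (hab : a + 1 ≤ b) using Int.leInduction with
  | base => simp [hX' a]
  | succ b hab ih =>
    have hsum : ∀ j ≤ b,
        ∑ ℓ ∈ Icc (j + 1) (b + 1), t ℓ = ∑ ℓ ∈ Icc (j + 1) b, t ℓ + t (b + 1) :=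
      fun j hj => sum_Icc_add_one_right t (by omega)
    have hsup : (Icc (a + 1) (b + 1)).sup' (nonempty_Icc.mpr (by omega))
          (fun j => s j - ∑ ℓ ∈ Icc (j + 1) (b + 1), t ℓ)
        = max (((Icc (a + 1) b).sup' (nonempty_Icc.mpr hab)
          fun j => s j - ∑ ℓ ∈ Icc (j + 1) b, t ℓ) - t (b + 1)) (s (b + 1)) := by
      rw [sup'_Icc_add_one_right _ hab, Icc_eq_empty_of_lt (lt_add_one (b + 1)), sum_empty,
        sub_zero, sub_eq_add_neg _ (t (b + 1)), sup'_add]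
      congr 1
      exact sup'_congr _ rfl fun j hj => by
        rw [hsum j (mem_Icc.mp hj).2, sub_add_eq_sub_sub, sub_eq_add_neg]
    rw [hX' b, ih, hsum a (by omega), hsup, ← max_sub_sub_right, sub_add_eq_sub_sub, max_assoc]

/-- If for some `n ≥ 1` we have `∑_{ℓ=-n+1}^{0} t ℓ > X' (-n)`, then
`X' 0 = max_{-n < j ≤ 0} (s j - ∑_{ℓ=j+1}^{0} t ℓ)`, and in particular
`X' 0 ≤ X* 0 = sup_{k ≥ 0} (s (-k) - ∑_{ℓ=-k+1}^{0} t ℓ)`. -/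
theorem stmt6 (s t : ℤ → ℝ) (hs : ∀ j, 0 < s j)
    (X' : ℤ → ℝ) (hX' : ∀ j : ℤ, X' (j + 1) = max (X' j - t (j + 1)) (s (j + 1)))
    (hbdd : BddAbove (Set.range fun k : ℕ =>
      s (-(k : ℤ)) - ∑ ℓ ∈ Finset.Icc (-(k : ℤ) + 1) 0, t ℓ))
    (n : ℕ) (hn : 1 ≤ n)
    (hdrain : ∑ ℓ ∈ Finset.Icc (-(n : ℤ) + 1) 0, t ℓ > X' (-(n : ℤ))) :
    X' 0 = (Finset.Icc (-(n : ℤ) + 1) 0).sup'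
        (Finset.nonempty_Icc.mpr (by omega))
        (fun j => s j - ∑ ℓ ∈ Finset.Icc (j + 1) 0, t ℓ) ∧
    X' 0 ≤ ⨆ k : ℕ, (s (-(k : ℤ)) - ∑ ℓ ∈ Finset.Icc (-(k : ℤ) + 1) 0, t ℓ) := by
  have hunroll := eq_max_sub_sum_sup'_of_lt hX' (a := -(n : ℤ)) (b := 0) (by omega)
  have hterm_zero : s 0 ≤ (Icc (-(n : ℤ) + 1) 0).sup' (nonempty_Icc.mpr (by omega))
      (fun j => s j - ∑ ℓ ∈ Icc (j + 1) 0, t ℓ) :=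
    le_sup'_of_le _ (mem_Icc.mpr ⟨by omega, le_rfl⟩) (by simp)
  have hX'_zero := hunroll.trans (max_eq_right (by linarith [hs 0]))
  refine ⟨hX'_zero, hX'_zero ▸ sup'_le _ _ fun j hj => ?_⟩
  obtain ⟨k, rfl⟩ : ∃ k : ℕ, -(k : ℤ) = j := 
    ⟨(-j).toNat, by have := mem_Icc.mp hj; omega⟩
  exact le_ciSup hbdd k
end

section
/- Let ξ be a real random variable and define m_-(t) = E min(t_1, t) for a positive random variable t_1 and N(t) = max{n ≥ 0 : T_n ≤ t} the renewal counting process of i.i.d. positive (t_i) with partial sums T_n. Then for every x > 0, x / m_-(x) ≤ E N(x) + 1 ≤ 2x / m_-(x). -/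
/-!
Write `U(x) = ∑_{n ≥ 0} P(T_n ≤ x) = E N(x) + 1`. Since `{T_n ≤ x}` is independent of `t_{n+1}`,
Wald's identity gives `E ∑_{n : T_n ≤ x} min(t_{n+1}, x) = m₋(x) U(x)`. Pathwise this random sum
lies between `x` and `2x`. Above: every summand but the last is at most its increment `t_{n+1}`,
these add up to at most `x`, and the last summand is at most `x`. Below: if `M` is the first index
with `T_M > x`, the summands with `n < M` add up to at least `min(T_M, x) = x`; such an `M` exists
almost surely by Borel–Cantelli, since the upper bound makes `U(x)` finite.
-/

open MeasureTheory ProbabilityTheory Finset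
open scoped ENNReal

section PartialSums

variable {u : ℕ → ℝ} {x : ℝ}

lemma sum_range_ite_min_le (hu : ∀ i, 0 ≤ u i) (hx : 0 ≤ x) (N : ℕ) :
    ∑ n ∈ range N, (if ∑ i ∈ Icc 1 n, u i ≤ x then min (u (n + 1)) x else 0) ≤ 2 * x ∧
    (∑ i ∈ Icc 1 N, u i ≤ x →
      ∑ n ∈ range N, (if ∑ i ∈ Icc 1 n, u i ≤ x then min (u (n + 1)) x else 0)
        ≤ ∑ i ∈ Icc 1 N, u i) := by
  induction N with
  | zero => simp [hx]
  | succ N ih =>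
    rw [sum_range_succ, sum_Icc_succ_top (by omega : 1 ≤ N + 1)]
    have hu' := hu (N + 1)
    split_ifs with hN
    · have hle_u := min_le_left (u (N + 1)) x
      have hle_x := min_le_right (u (N + 1)) x
      constructor <;> intros <;> linarith [ih.2 hN]
    · exact ⟨by linarith [ih.1], fun h ↦ absurd (by linarith) hN⟩

lemma min_le_sum_range_ite_min (hu : ∀ i, 0 ≤ u i) (hx : 0 ≤ x) (N : ℕ) :
    min (∑ i ∈ Icc 1 N, u i) x ≤
      ∑ n ∈ range N, (if ∑ i ∈ Icc 1 n, u i ≤ x then min (u (n + 1)) x else 0) := by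
  induction N with
  | zero => simp [hx]
  | succ N ih =>
    rw [sum_range_succ, sum_Icc_succ_top (by omega : 1 ≤ N + 1)]
    have hS : 0 ≤ ∑ i ∈ Icc 1 N, u i := sum_nonneg fun i _ ↦ hu i
    split_ifs with hN
    · rw [min_eq_left hN] at ih
      rcases le_total (u (N + 1)) x with h | h
      · rw [min_eq_left h]; linarith [min_le_left (∑ i ∈ Icc 1 N, u i + u (N + 1)) x]
      · rw [min_eq_right h]; linarith [min_le_right (∑ i ∈ Icc 1 N, u i + u (N + 1)) x]
    · rw [min_eq_right (not_le.1 hN).le] at ih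
      linarith [min_le_right (∑ i ∈ Icc 1 N, u i + u (N + 1)) x]

lemma ofReal_ite_zero (p : Prop) [Decidable p] (a : ℝ) :
    ENNReal.ofReal (if p then a else 0) = if p then ENNReal.ofReal a else 0 := by
  split_ifs <;> simp

lemma ite_min_nonneg (hu : ∀ i, 0 ≤ u i) (hx : 0 ≤ x) (n : ℕ) :
    0 ≤ if ∑ i ∈ Icc 1 n, u i ≤ x then min (u (n + 1)) x else 0 := by
  split_ifs
  exacts [le_min (hu _) hx, le_rfl]

lemma tsum_ite_ofReal_min_le (hu : ∀ i, 0 ≤ u i) (hx : 0 ≤ x) :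
    ∑' n, (if ∑ i ∈ Icc 1 n, u i ≤ x then ENNReal.ofReal (min (u (n + 1)) x) else 0)
      ≤ ENNReal.ofReal (2 * x) :=
  ENNReal.tsum_le_of_sum_range_le fun N ↦ by
    simp_rw [← ofReal_ite_zero]
    rw [← ENNReal.ofReal_sum_of_nonneg fun n _ ↦ ite_min_nonneg hu hx n]
    exact ENNReal.ofReal_le_ofReal (sum_range_ite_min_le hu hx N).1

lemma ofReal_le_tsum_ite_ofReal_min (hu : ∀ i, 0 ≤ u i) (hx : 0 ≤ x) {N : ℕ}
    (hN : x < ∑ i ∈ Icc 1 N, u i) :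
    ENNReal.ofReal x ≤
      ∑' n, (if ∑ i ∈ Icc 1 n, u i ≤ x then ENNReal.ofReal (min (u (n + 1)) x) else 0) := by
  simp_rw [← ofReal_ite_zero]
  calc ENNReal.ofReal x
      = ENNReal.ofReal (min (∑ i ∈ Icc 1 N, u i) x) := by rw [min_eq_right hN.le]
    _ ≤ ENNReal.ofReal
          (∑ n ∈ range N, (if ∑ i ∈ Icc 1 n, u i ≤ x then min (u (n + 1)) x else 0)) :=
        ENNReal.ofReal_le_ofReal (min_le_sum_range_ite_min hu hx N)
    _ = ∑ n ∈ range N, ENNReal.ofReal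
          (if ∑ i ∈ Icc 1 n, u i ≤ x then min (u (n + 1)) x else 0) :=
        ENNReal.ofReal_sum_of_nonneg fun n _ ↦ ite_min_nonneg hu hx n
    _ ≤ _ := ENNReal.sum_le_tsum _

end PartialSums

section Renewal

variable {Ω : Type*} [MeasurableSpace Ω] {μ : Measure Ω}

-- `E N(x) + 1`: the term `n = 0` is `P(T_0 ≤ x)` with `T_0 = 0`.
noncomputable def renewalFunction (μ : Measure Ω) (t : ℕ → Ω → ℝ) (x : ℝ) : ℝ≥0∞ :=
  ∑' n, μ {ω | ∑ i ∈ Icc 1 n, t i ω ≤ x}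

lemma lintegral_ite_mul_of_indepFun {β γ : Type*} [MeasurableSpace β] [MeasurableSpace γ]
    {X : Ω → β} {Y : Ω → γ} (hX : Measurable X) (hY : Measurable Y) (hXY : IndepFun X Y μ)
    {p : β → Prop} [DecidablePred p] (hp : MeasurableSet {b | p b}) {f : γ → ℝ≥0∞}
    (hf : Measurable f) :
    ∫⁻ ω, (if p (X ω) then f (Y ω) else 0) ∂μ = μ {ω | p (X ω)} * ∫⁻ ω, f (Y ω) ∂μ := by
  have hprod : (fun ω ↦ if p (X ω) then f (Y ω) else 0)
      = ({b | p b}.indicator 1 ∘ X) * (f ∘ Y) := by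
    ext ω; by_cases h : p (X ω) <;> simp [h]
  rw [hprod, lintegral_mul_eq_lintegral_mul_lintegral_of_indepFun
    ((measurable_one.indicator hp).comp hX) (hf.comp hY)
    (hXY.comp (measurable_one.indicator hp) hf)]
  exact congrArg (· * _) (lintegral_indicator_one (hX hp))

-- Wald's identity for the stopping time `N(x) + 1`.
lemma lintegral_tsum_ite_sum_Icc_le_eq_mul_renewalFunction {t : ℕ → Ω → ℝ}
    (hmeas : ∀ n, Measurable (t n)) (hindep : iIndepFun t μ) (hident : ∀ n, IdentDistrib (t n) (t 1) μ μ)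
    {f : ℝ → ℝ≥0∞} (hf : Measurable f) (x : ℝ) :
    ∫⁻ ω, ∑' n, (if ∑ i ∈ Icc 1 n, t i ω ≤ x then f (t (n + 1) ω) else 0) ∂μ
      = (∫⁻ ω, f (t 1 ω) ∂μ) * renewalFunction μ t x := by
  have hSmeas : ∀ n, Measurable fun ω ↦ ∑ i ∈ Icc 1 n, t i ω := fun n ↦
    Finset.measurable_sum _ fun i _ ↦ hmeas i
  rw [renewalFunction, lintegral_tsum fun n ↦ ?_, ← ENNReal.tsum_mul_left]
  · refine tsum_congr fun n ↦ ?_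
    have hindep_n := hindep.indepFun_finsetSum_of_notMem hmeas (by simp : n + 1 ∉ Icc 1 n)
    rw [sum_fn] at hindep_n
    have hlaw : ∫⁻ ω, f (t (n + 1) ω) ∂μ = ∫⁻ ω, f (t 1 ω) ∂μ :=
      ((hident (n + 1)).comp hf).lintegral_eq
    rw [mul_comm, ← hlaw]
    exact lintegral_ite_mul_of_indepFun (hSmeas n) (hmeas (n + 1)) hindep_n
      (p := (· ≤ x)) measurableSet_Iic hf
  · exact (Measurable.ite (measurableSet_le (hSmeas n) measurable_const)
      (hf.comp (hmeas (n + 1))) measurable_const).aemeasurable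

lemma lintegral_ofReal_min_ne_zero [NeZero μ] {X : Ω → ℝ} (hX : Measurable X)
    (hpos : ∀ᵐ ω ∂μ, 0 < X ω) {x : ℝ} (hx : 0 < x) :
    ∫⁻ ω, ENNReal.ofReal (min (X ω) x) ∂μ ≠ 0 := by
  rw [Ne, lintegral_eq_zero_iff (hX.min measurable_const).ennreal_ofReal]
  intro hzero
  obtain ⟨ω, hω0, hωpos⟩ := (hzero.and hpos).exists
  exact (ENNReal.ofReal_pos.2 (lt_min hωpos hx)).ne' hω0

lemma ofReal_integral_min_eq_lintegral [IsFiniteMeasure μ] {X : Ω → ℝ} (hX : Measurable X)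
    (hX₀ : ∀ᵐ ω ∂μ, 0 ≤ X ω) {x : ℝ} (hx : 0 ≤ x) :
    ENNReal.ofReal (∫ ω, min (X ω) x ∂μ) = ∫⁻ ω, ENNReal.ofReal (min (X ω) x) ∂μ := by
  have hmin : ∀ᵐ ω ∂μ, 0 ≤ min (X ω) x := hX₀.mono fun ω h ↦ le_min h hx
  refine ofReal_integral_eq_lintegral_ofReal ?_ hmin
  refine .of_bound (hX.min measurable_const).aestronglyMeasurable x ?_
  filter_upwards [hmin] with ω h
  rw [Real.norm_eq_abs, abs_of_nonneg h]
  exact min_le_right _ _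

section ProbabilityMeasure

variable [IsProbabilityMeasure μ] {t : ℕ → Ω → ℝ} {x : ℝ}

lemma lintegral_min_mul_renewalFunction_le (hmeas : ∀ n, Measurable (t n))
    (hindep : iIndepFun t μ) (hident : ∀ n, IdentDistrib (t n) (t 1) μ μ)
    (hpos : ∀ n, ∀ᵐ ω ∂μ, 0 < t n ω) (hx : 0 ≤ x) :
    (∫⁻ ω, ENNReal.ofReal (min (t 1 ω) x) ∂μ) * renewalFunction μ t x
      ≤ ENNReal.ofReal (2 * x) := by
  rw [← lintegral_tsum_ite_sum_Icc_le_eq_mul_renewalFunction hmeas hindep hident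
    (f := fun y ↦ ENNReal.ofReal (min y x)) (measurable_id.min measurable_const).ennreal_ofReal]
  refine (lintegral_mono_ae (g := fun _ ↦ ENNReal.ofReal (2 * x)) ?_).trans_eq (by simp)
  filter_upwards [ae_all_iff.2 hpos] with ω hω
  exact tsum_ite_ofReal_min_le (fun i ↦ (hω i).le) hx

lemma renewalFunction_ne_top (hmeas : ∀ n, Measurable (t n))
    (hindep : iIndepFun t μ) (hident : ∀ n, IdentDistrib (t n) (t 1) μ μ)
    (hpos : ∀ n, ∀ᵐ ω ∂μ, 0 < t n ω) (hx : 0 < x) :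
    renewalFunction μ t x ≠ ⊤ := by
  intro htop
  have := lintegral_min_mul_renewalFunction_le hmeas hindep hident hpos hx.le
  rw [htop, ENNReal.mul_top (lintegral_ofReal_min_ne_zero (hmeas 1) (hpos 1) hx)] at this
  exact ENNReal.ofReal_ne_top (top_le_iff.1 this)

lemma ofReal_le_lintegral_min_mul_renewalFunction (hmeas : ∀ n, Measurable (t n))
    (hindep : iIndepFun t μ) (hident : ∀ n, IdentDistrib (t n) (t 1) μ μ)
    (hpos : ∀ n, ∀ᵐ ω ∂μ, 0 < t n ω) (hx : 0 < x) :
    ENNReal.ofReal x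
      ≤ (∫⁻ ω, ENNReal.ofReal (min (t 1 ω) x) ∂μ) * renewalFunction μ t x := by
  rw [← lintegral_tsum_ite_sum_Icc_le_eq_mul_renewalFunction hmeas hindep hident
    (f := fun y ↦ ENNReal.ofReal (min y x)) (measurable_id.min measurable_const).ennreal_ofReal]
  have hescape : ∀ᵐ ω ∂μ, ∃ N, x < ∑ i ∈ Icc 1 N, t i ω :=
    (ae_eventually_notMem (renewalFunction_ne_top hmeas hindep hident hpos hx)).mono
      fun ω h ↦ h.exists.imp fun N hN ↦ not_le.1 hN
  refine (by simp : ENNReal.ofReal x = ∫⁻ _, ENNReal.ofReal x ∂μ).trans_le (lintegral_mono_ae ?_)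
  filter_upwards [ae_all_iff.2 hpos, hescape] with ω hω ⟨N, hN⟩
  exact ofReal_le_tsum_ite_ofReal_min (fun i ↦ (hω i).le) hx.le hN

end ProbabilityMeasure

end Renewal

/-- For i.i.d. positive `(t i)` with partial sums `T n` and renewal
counting process `N(x) = #{n ≥ 1 : T n ≤ x}` (so that `E N(x) = ∑_{n≥1} P(T n ≤ x)`),
and `m₋(x) = E min(t 1, x)`, one has `x / m₋(x) ≤ E N(x) + 1 ≤ 2 x / m₋(x)` for `x > 0`. -/
theorem stmt16 {Ω : Type*} [MeasurableSpace Ω] (μ : Measure Ω) [IsProbabilityMeasure μ]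
    (t : ℕ → Ω → ℝ) (hmeas : ∀ n, Measurable (t n))
    (hindep : iIndepFun t μ)
    (hident : ∀ n, IdentDistrib (t n) (t 1) μ μ)
    (hpos : ∀ n, ∀ᵐ ω ∂μ, 0 < t n ω)
    (T : ℕ → Ω → ℝ) (hT : ∀ n ω, T n ω = ∑ i ∈ Finset.Icc 1 n, t i ω)
    (m : ℝ → ℝ) (hm : ∀ z, m z = ∫ ω, min (t 1 ω) z ∂μ)
    (x : ℝ) (hx : 0 < x) :
    ENNReal.ofReal (x / m x) ≤ (∑' n : ℕ, μ {ω | T (n + 1) ω ≤ x}) + 1 ∧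
    (∑' n : ℕ, μ {ω | T (n + 1) ω ≤ x}) + 1 ≤ ENNReal.ofReal (2 * x / m x) := by
  obtain rfl : T = fun n ω ↦ ∑ i ∈ Icc 1 n, t i ω := funext fun n ↦ funext (hT n)
  have hc : ENNReal.ofReal (m x) = ∫⁻ ω, ENNReal.ofReal (min (t 1 ω) x) ∂μ :=
    hm x ▸ ofReal_integral_min_eq_lintegral (hmeas 1) ((hpos 1).mono fun _ ↦ le_of_lt) hx.le
  have hmx : 0 < m x := ENNReal.ofReal_pos.1 <|
    hc ▸ pos_iff_ne_zero.2 (lintegral_ofReal_min_ne_zero (hmeas 1) (hpos 1) hx)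
  have hsplit : ∑' n, μ {ω | ∑ i ∈ Icc 1 (n + 1), t i ω ≤ x} + 1 = renewalFunction μ t x := by
    rw [renewalFunction, tsum_eq_zero_add' (f := fun n ↦ μ {ω | ∑ i ∈ Icc 1 n, t i ω ≤ x})
      ENNReal.summable, add_comm]
    simp [hx.le]
  have hlower := ofReal_le_lintegral_min_mul_renewalFunction hmeas hindep hident hpos hx
  have hupper := lintegral_min_mul_renewalFunction_le hmeas hindep hident hpos hx.le
  rw [← hc] at hlower hupper
  rw [hsplit, ENNReal.ofReal_div_of_pos hmx, ENNReal.ofReal_div_of_pos hmx]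
  constructor
  · exact ENNReal.div_le_of_le_mul' hlower
  · rw [ENNReal.le_div_iff_mul_le (by simp [hmx]) (by simp), mul_comm]
    exact hupper
end
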